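/- arXiv:2205.07003 — 2 statements merged into one kernel-verified Lean document; each statement's English description precedes it below -/
import Mathlib

section
/- Let c₀ ≥ 4, μ > 0, α_k = 1/(μ(k+c₀-1)), 0 < β < 1. Then for all t ≥ 1, ∑_{k=1}^{t} (1/α_k) ∑_{s=1}^{k} β^{k-s} α_{s-1} ≤ (2-β)t/(1-β)². -/
lemma aux_geom_sum (β : ℝ) (hβ0 : 0 ≤ β) (hβ1 : β < 1) (k : ℕ) :
    ∑ j ∈ Finset.range k, ((j : ℝ) + 2) * β ^ j ≤ (2 - β) / (1 - β) ^ 2 := by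
  have hb : ‖β‖ < 1 := by rwa [Real.norm_eq_abs, abs_of_nonneg hβ0]
  have hs1 : Summable (fun n : ℕ => (n : ℝ) * β ^ n) :=
    (hasSum_coe_mul_geometric_of_norm_lt_one hb).summable
  have hs2 : Summable (fun n : ℕ => β ^ n) := summable_geometric_of_norm_lt_one hb
  have hsum : Summable (fun n : ℕ => ((n : ℝ) + 2) * β ^ n) := by
    have := hs1.add (hs2.mul_left 2)
    apply this.congr
    intro n; ring
  have h1 : ∑ j ∈ Finset.range k, ((j : ℝ) + 2) * β ^ j ≤ ∑' n : ℕ, ((n : ℝ) + 2) * β ^ n :=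
    Summable.sum_le_tsum _ (fun n _ => by positivity) hsum
  have h2 : ∑' n : ℕ, ((n : ℝ) + 2) * β ^ n = β / (1 - β) ^ 2 + 2 * (1 - β)⁻¹ := by
    rw [show (fun n : ℕ => ((n : ℝ) + 2) * β ^ n)
        = fun n : ℕ => (n : ℝ) * β ^ n + 2 * β ^ n from by funext n; ring]
    rw [Summable.tsum_add hs1 (hs2.mul_left 2), tsum_coe_mul_geometric_of_norm_lt_one hb,
      tsum_mul_left, tsum_geometric_of_lt_one hβ0 hβ1]
  have hpos : (0 : ℝ) < 1 - β := by linarith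
  have h3 : β / (1 - β) ^ 2 + 2 * (1 - β)⁻¹ = (2 - β) / (1 - β) ^ 2 := by
    field_simp
    ring
  linarith [h1, h2 ▸ h1]

/-- With `c₀ ≥ 4`, `μ > 0`, `α_k = 1/(μ(k+c₀-1))`, `0 < β < 1`: for all `t ≥ 1`,
`∑_{k=1}^t (1/α_k) ∑_{s=1}^k β^{k-s} α_{s-1} ≤ (2-β)t/(1-β)²`. -/
theorem stmt_4 (β μ c₀ : ℝ) (hβ0 : 0 < β) (hβ1 : β < 1) (hμ : 0 < μ) (hc : 4 ≤ c₀)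
    (α : ℕ → ℝ) (hα : ∀ k : ℕ, α k = 1 / (μ * ((k : ℝ) + c₀ - 1)))
    (t : ℕ) (ht : 1 ≤ t) :
    ∑ k ∈ Finset.Icc 1 t, (1 / α k) * ∑ s ∈ Finset.Icc 1 k, β ^ (k - s) * α (s - 1) ≤
      (2 - β) * t / (1 - β) ^ 2 := by
  have hb2 : (0 : ℝ) < 1 - β := by linarith
  have key : ∀ k ∈ Finset.Icc 1 t,
      (1 / α k) * ∑ s ∈ Finset.Icc 1 k, β ^ (k - s) * α (s - 1) ≤ (2 - β) / (1 - β) ^ 2 := by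
    intro k hk
    rw [Finset.mul_sum]
    have h1 : ∑ s ∈ Finset.Icc 1 k, (1 / α k) * (β ^ (k - s) * α (s - 1))
        ≤ ∑ s ∈ Finset.Icc 1 k, (((k - s : ℕ) : ℝ) + 2) * β ^ (k - s) := by
      apply Finset.sum_le_sum
      intro s hs
      obtain ⟨hs1, hs2⟩ := Finset.mem_Icc.mp hs
      have hcast1 : ((s - 1 : ℕ) : ℝ) = (s : ℝ) - 1 := by
        rw [Nat.cast_sub hs1]; norm_num
      have hcast2 : ((k - s : ℕ) : ℝ) = (k : ℝ) - (s : ℝ) := by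
        rw [Nat.cast_sub hs2]
      have hsr : (1 : ℝ) ≤ (s : ℝ) := by exact_mod_cast hs1
      have hkr : (s : ℝ) ≤ (k : ℝ) := by exact_mod_cast hs2
      have hD : (0 : ℝ) < (s : ℝ) - 1 + c₀ - 1 := by linarith
      have hpow : (0 : ℝ) ≤ β ^ (k - s) := by positivity
      rw [hα, hα, hcast1, hcast2, one_div_one_div]
      have hnum : μ * ((k : ℝ) + c₀ - 1) * (1 / (μ * ((s : ℝ) - 1 + c₀ - 1)))
          ≤ (k : ℝ) - (s : ℝ) + 2 := by
        rw [mul_one_div, div_le_iff₀ (by positivity)]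
        nlinarith [mul_nonneg (mul_nonneg hμ.le (show (0 : ℝ) ≤ (k : ℝ) - (s : ℝ) + 1 by linarith))
          (show (0 : ℝ) ≤ (s : ℝ) + c₀ - 3 by linarith)]
      calc μ * ((k : ℝ) + c₀ - 1) * (β ^ (k - s) * (1 / (μ * ((s : ℝ) - 1 + c₀ - 1))))
          = (μ * ((k : ℝ) + c₀ - 1) * (1 / (μ * ((s : ℝ) - 1 + c₀ - 1)))) * β ^ (k - s) := by
            ring
        _ ≤ ((k : ℝ) - (s : ℝ) + 2) * β ^ (k - s) :=
            mul_le_mul_of_nonneg_right hnum hpow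
    have h2 : ∑ s ∈ Finset.Icc 1 k, (((k - s : ℕ) : ℝ) + 2) * β ^ (k - s)
        = ∑ j ∈ Finset.range k, ((j : ℝ) + 2) * β ^ j := by
      apply Finset.sum_nbij' (fun s => k - s) (fun j => k - j)
      · intro s hs
        obtain ⟨hs1, hs2⟩ := Finset.mem_Icc.mp hs
        exact Finset.mem_range.mpr (by omega)
      · intro j hj
        have := Finset.mem_range.mp hj
        exact Finset.mem_Icc.mpr (by omega)
      · intro s hs
        obtain ⟨hs1, hs2⟩ := Finset.mem_Icc.mp hs
        omega
      · intro j hj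
        have := Finset.mem_range.mp hj
        omega
      · intro s hs
        rfl
    calc ∑ s ∈ Finset.Icc 1 k, (1 / α k) * (β ^ (k - s) * α (s - 1))
        ≤ ∑ s ∈ Finset.Icc 1 k, (((k - s : ℕ) : ℝ) + 2) * β ^ (k - s) := h1
      _ = ∑ j ∈ Finset.range k, ((j : ℝ) + 2) * β ^ j := h2
      _ ≤ (2 - β) / (1 - β) ^ 2 := aux_geom_sum β hβ0.le hβ1 k
  calc ∑ k ∈ Finset.Icc 1 t, (1 / α k) * ∑ s ∈ Finset.Icc 1 k, β ^ (k - s) * α (s - 1)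
      ≤ ∑ k ∈ Finset.Icc 1 t, (2 - β) / (1 - β) ^ 2 := Finset.sum_le_sum key
    _ = (t : ℝ) * ((2 - β) / (1 - β) ^ 2) := by
        rw [Finset.sum_const, Nat.card_Icc]
        simp [nsmul_eq_mul]
    _ = (2 - β) * t / (1 - β) ^ 2 := by ring
end

section
/- Let c₀ ≥ 4, μ > 0, α_k = 1/(μ(k+c₀-1)), 0 < β < 1. Then for all t ≥ 1, ∑_{k=1}^{t} (1/α_k) ∑_{s=1}^{k+1} β^{k+1-s} α_{s-1} ≤ t/(1-β)². -/
lemma aux_sum_le (β : ℝ) (hβ0 : 0 < β) (hβ1 : β < 1) (n : ℕ) :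
    ∑ j ∈ Finset.range n, ((j : ℝ) + 1) * β ^ j ≤ 1 / (1 - β) ^ 2 := by
  have hnorm : ‖β‖ < 1 := by rw [Real.norm_eq_abs, abs_of_pos hβ0]; exact hβ1
  have hs1 : Summable (fun j : ℕ => (j : ℝ) * β ^ j) := by
    simpa using summable_pow_mul_geometric_of_norm_lt_one 1 hnorm
  have hs2 : Summable (fun j : ℕ => β ^ j) := summable_geometric_of_lt_one hβ0.le hβ1
  have hs : Summable (fun j : ℕ => ((j : ℝ) + 1) * β ^ j) := by
    simpa [add_mul] using hs1.add hs2
  have hle : ∑ j ∈ Finset.range n, ((j : ℝ) + 1) * β ^ j ≤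
      ∑' j : ℕ, ((j : ℝ) + 1) * β ^ j := by
    refine Summable.sum_le_tsum _ (fun j _ => ?_) hs
    positivity
  have htsum : ∑' j : ℕ, ((j : ℝ) + 1) * β ^ j = 1 / (1 - β) ^ 2 := by
    have h1 : ∑' j : ℕ, (j : ℝ) * β ^ j = β / (1 - β) ^ 2 :=
      tsum_coe_mul_geometric_of_norm_lt_one hnorm
    have h2 : ∑' j : ℕ, β ^ j = (1 - β)⁻¹ := tsum_geometric_of_lt_one hβ0.le hβ1
    have := Summable.tsum_add hs1 hs2
    simp only [add_mul, one_mul] at *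
    rw [this, h1, h2]
    have hb : (1 - β) ≠ 0 := by nlinarith
    field_simp
    ring
  linarith

/-- With `c₀ ≥ 4`, `μ > 0`, `α_k = 1/(μ(k+c₀-1))`, `0 < β < 1`: for all `t ≥ 1`,
`∑_{k=1}^t (1/α_k) ∑_{s=1}^{k+1} β^{k+1-s} α_{s-1} ≤ t/(1-β)²`. -/
theorem stmt_5 (β μ c₀ : ℝ) (hβ0 : 0 < β) (hβ1 : β < 1) (hμ : 0 < μ) (hc : 4 ≤ c₀)
    (α : ℕ → ℝ) (hα : ∀ k : ℕ, α k = 1 / (μ * ((k : ℝ) + c₀ - 1)))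
    (t : ℕ) (ht : 1 ≤ t) :
    ∑ k ∈ Finset.Icc 1 t, (1 / α k) *
        ∑ s ∈ Finset.Icc 1 (k + 1), β ^ (k + 1 - s) * α (s - 1) ≤
      (t : ℝ) / (1 - β) ^ 2 := by
  have key : ∀ k ∈ Finset.Icc 1 t, (1 / α k) *
      ∑ s ∈ Finset.Icc 1 (k + 1), β ^ (k + 1 - s) * α (s - 1) ≤ 1 / (1 - β) ^ 2 := by
    intro k _
    have hkpos : (0 : ℝ) < μ * ((k : ℝ) + c₀ - 1) := by
      have : (0:ℝ) ≤ (k:ℝ) := Nat.cast_nonneg k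
      nlinarith
    have h1 : 1 / α k = μ * ((k : ℝ) + c₀ - 1) := by
      rw [hα k, one_div_one_div]
    rw [h1, Finset.mul_sum]
    -- bound each term
    have hstep : ∀ s ∈ Finset.Icc 1 (k + 1),
        μ * ((k : ℝ) + c₀ - 1) * (β ^ (k + 1 - s) * α (s - 1)) ≤
        (((k + 1 - s : ℕ) : ℝ) + 1) * β ^ (k + 1 - s) := by
      intro s hs
      simp only [Finset.mem_Icc] at hs
      obtain ⟨hs1, hs2⟩ := hs
      rw [hα (s - 1)]
      have hcast : ((s - 1 : ℕ) : ℝ) = (s : ℝ) - 1 := by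
        rw [Nat.cast_sub hs1]; norm_num
      have hcast2 : ((k + 1 - s : ℕ) : ℝ) = (k : ℝ) + 1 - (s : ℝ) := by
        rw [Nat.cast_sub (by omega)]; push_cast; ring
      rw [hcast, hcast2]
      have hden : (0 : ℝ) < μ * ((s : ℝ) - 1 + c₀ - 1) := by
        have h1s : (1:ℝ) ≤ (s:ℝ) := by exact_mod_cast hs1
        nlinarith
      have hsk : (s : ℝ) ≤ (k : ℝ) + 1 := by exact_mod_cast hs2
      have h1s : (1:ℝ) ≤ (s:ℝ) := by exact_mod_cast hs1
      have hβpow : (0:ℝ) < β ^ (k + 1 - s) := pow_pos hβ0 _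
      rw [one_div]
      -- goal: μ(k+c₀-1) * (β^e * (μ(s-1+c₀-1))⁻¹) ≤ (k+1-s+1) * β^e
      rw [show μ * ((k:ℝ) + c₀ - 1) * (β ^ (k + 1 - s) * (μ * ((s:ℝ) - 1 + c₀ - 1))⁻¹)
          = (μ * ((k:ℝ) + c₀ - 1) * (μ * ((s:ℝ) - 1 + c₀ - 1))⁻¹) * β ^ (k + 1 - s) by ring]
      gcongr
      rw [mul_inv_le_iff₀ hden]
      have : ((k:ℝ) + 1 - s + 1) * (μ * ((s:ℝ) - 1 + c₀ - 1)) - μ * ((k:ℝ) + c₀ - 1)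
          = μ * (((k:ℝ) + 1 - s) * ((s:ℝ) + c₀ - 3)) := by ring
      nlinarith [mul_nonneg (sub_nonneg.2 hsk) (by nlinarith : (0:ℝ) ≤ (s:ℝ) + c₀ - 3)]
    calc ∑ s ∈ Finset.Icc 1 (k + 1), μ * ((k : ℝ) + c₀ - 1) * (β ^ (k + 1 - s) * α (s - 1))
        ≤ ∑ s ∈ Finset.Icc 1 (k + 1), (((k + 1 - s : ℕ) : ℝ) + 1) * β ^ (k + 1 - s) :=
          Finset.sum_le_sum hstep
      _ = ∑ j ∈ Finset.range (k + 1), ((j : ℝ) + 1) * β ^ j := by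
          refine Finset.sum_nbij' (fun s => k + 1 - s) (fun j => k + 1 - j) ?_ ?_ ?_ ?_ ?_
          · intro s hs; simp only [Finset.mem_Icc] at hs; simp only [Finset.mem_range]; omega
          · intro j hj; simp only [Finset.mem_range] at hj; simp only [Finset.mem_Icc]; omega
          · intro s hs; simp only [Finset.mem_Icc] at hs; show k + 1 - (k + 1 - s) = s; omega
          · intro j hj; simp only [Finset.mem_range] at hj; show k + 1 - (k + 1 - j) = j; omega
          · intro s hs; rfl
      _ ≤ 1 / (1 - β) ^ 2 := aux_sum_le β hβ0 hβ1 _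
  calc ∑ k ∈ Finset.Icc 1 t, (1 / α k) *
        ∑ s ∈ Finset.Icc 1 (k + 1), β ^ (k + 1 - s) * α (s - 1)
      ≤ ∑ k ∈ Finset.Icc 1 t, 1 / (1 - β) ^ 2 := Finset.sum_le_sum key
    _ = (t : ℝ) / (1 - β) ^ 2 := by
        rw [Finset.sum_const, Nat.card_Icc]
        simp [div_eq_mul_inv]
end
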